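/- For every δ with 0 < δ < 1, the integral I_s(δ) := ∫₀¹ sin(2πv) / (1 − δ sin(2πv))^{3/2} dv satisfies I_s(δ) = (2/π) · 1/(δ(1−δ)√(1+δ)) · ( E(2δ/(1+δ)) − (1−δ) K(2δ/(1+δ)) ), where E(m) = ∫₀^{π/2} √(1 − m sin²θ) dθ and K(m) = ∫₀^{π/2} 1/√(1 − m sin²θ) dθ are the complete elliptic integrals of the second and first kind. -/

import Mathlib

/-!
After `u = 2πv`, periodicity and the symmetry `sin (π - u) = sin u` reduce the integral over a
period to twice the integral over `[-π/2, π/2]`; there `u = 2θ - π/2` turns `sin u` into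
`2 sin²θ - 1` and `1 - δ sin u` into `(1 + δ) (1 - m sin²θ)` with `m = 2δ / (1 + δ)`.
The resulting integrand `(2 sin²θ - 1) P^(-3/2)`, `P = 1 - m sin²θ`, is a combination of
`P^(-1/2)` and `P^(-3/2)`, and `(1 - m) ∫₀^{π/2} P^(-3/2) = E(m)` because
`√P - (1 - m) P^(-3/2)` is the derivative of `m sin θ cos θ / √P`, which vanishes at both ends.
-/

noncomputable section

open Real intervalIntegral

/-- Complete elliptic integral of the first kind. -/
def ellipticK (m : ℝ) : ℝ :=
  ∫ θ in (0:ℝ)..(π/2), 1 / Real.sqrt (1 - m * Real.sin θ ^ 2)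

/-- Complete elliptic integral of the second kind. -/
def ellipticE (m : ℝ) : ℝ :=
  ∫ θ in (0:ℝ)..(π/2), Real.sqrt (1 - m * Real.sin θ ^ 2)

lemma one_sub_mul_sin_sq_pos {m : ℝ} (hm : m < 1) (θ : ℝ) : 0 < 1 - m * sin θ ^ 2 := by
  rcases le_or_gt m 0 with hm0 | hm0
  · nlinarith [sq_nonneg (sin θ)]
  · nlinarith [sin_sq_le_one θ]

lemma rpow_three_halves_eq_mul_sqrt {x : ℝ} (hx : 0 ≤ x) : x ^ ((3:ℝ)/2) = x * √x := by
  rw [show (3:ℝ)/2 = 1 + 1/2 by norm_num, rpow_add' hx (by norm_num), rpow_one, sqrt_eq_rpow]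

section Elliptic

variable {m : ℝ}

lemma hasDerivAt_mul_sin_mul_cos_div_sqrt (hm : m < 1) (θ : ℝ) :
    HasDerivAt (fun θ => m * (sin θ * cos θ / √(1 - m * sin θ ^ 2)))
      (√(1 - m * sin θ ^ 2) - (1 - m) / (1 - m * sin θ ^ 2) ^ ((3:ℝ)/2)) θ := by
  have hP := one_sub_mul_sin_sq_pos hm θ
  have hq : 0 < √(1 - m * sin θ ^ 2) := sqrt_pos.2 hP
  have hP' : HasDerivAt (fun θ => 1 - m * sin θ ^ 2) (-(m * (2 * sin θ * cos θ))) θ := by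
    simpa using (((hasDerivAt_sin θ).pow 2).const_mul m).const_sub 1
  have hderiv := (((hasDerivAt_sin θ).mul (hasDerivAt_cos θ)).div
    ((hasDerivAt_sqrt hP.ne').comp θ hP') hq.ne').const_mul m
  refine hderiv.congr_deriv ?_
  rw [rpow_three_halves_eq_mul_sqrt hP.le]
  have hq2 : √(1 - m * sin θ ^ 2) ^ 2 = 1 - m * sin θ ^ 2 := sq_sqrt hP.le
  simp only [Function.comp_apply, Pi.mul_apply]
  field_simp
  set P := 1 - m * sin θ ^ 2
  linear_combination (m * P * (cos θ ^ 2 - sin θ ^ 2) - P * (√P ^ 2 + P) + (1 - m)) * hq2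
    + m * P * sin_sq_add_cos_sq θ

lemma continuous_sqrt_one_sub_mul_sin_sq : Continuous fun θ => √(1 - m * sin θ ^ 2) := by
  fun_prop

lemma continuous_one_div_sqrt_one_sub_mul_sin_sq (hm : m < 1) :
    Continuous fun θ => 1 / √(1 - m * sin θ ^ 2) :=
  continuous_const.div continuous_sqrt_one_sub_mul_sin_sq
    fun θ => (sqrt_pos.2 (one_sub_mul_sin_sq_pos hm θ)).ne'

lemma continuous_div_one_sub_mul_sin_sq_rpow (c : ℝ) (hm : m < 1) :
    Continuous fun θ => c / (1 - m * sin θ ^ 2) ^ ((3:ℝ)/2) :=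
  continuous_const.div ((by fun_prop : Continuous fun θ => 1 - m * sin θ ^ 2).rpow_const
    fun _ => Or.inr (by norm_num)) fun θ => (rpow_pos_of_pos (one_sub_mul_sin_sq_pos hm θ) _).ne'

lemma one_sub_mul_integral_inv_rpow_three_halves (hm : m < 1) :
    (1 - m) * ∫ θ in (0:ℝ)..(π/2), 1 / (1 - m * sin θ ^ 2) ^ ((3:ℝ)/2) = ellipticE m := by
  have hE := continuous_sqrt_one_sub_mul_sin_sq (m := m)
  have hJ := continuous_div_one_sub_mul_sin_sq_rpow (1 - m) hm
  have hFTC := integral_eq_sub_of_hasDerivAt (a := 0) (b := π/2)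
    (fun θ _ => hasDerivAt_mul_sin_mul_cos_div_sqrt hm θ) ((hE.sub hJ).intervalIntegrable _ _)
  rw [integral_sub (hE.intervalIntegrable _ _) (hJ.intervalIntegrable _ _)] at hFTC
  simp only [cos_pi_div_two, sin_zero, zero_mul, mul_zero, zero_div, sub_zero,
    sub_eq_zero] at hFTC
  rw [← integral_const_mul, ellipticE, hFTC]
  simp only [mul_one_div]

lemma integral_two_sin_sq_sub_one_div_rpow_three_halves (hm : m < 1) :
    (1 - m) * (m * ∫ θ in (0:ℝ)..(π/2), (2 * sin θ ^ 2 - 1) / (1 - m * sin θ ^ 2) ^ ((3:ℝ)/2))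
      = (2 - m) * ellipticE m - 2 * (1 - m) * ellipticK m := by
  -- `m (2 sin² θ - 1) = (2 - m) - 2 (1 - m sin² θ)`
  have hsplit : ∀ θ, m * ((2 * sin θ ^ 2 - 1) / (1 - m * sin θ ^ 2) ^ ((3:ℝ)/2))
      = (2 - m) * (1 / (1 - m * sin θ ^ 2) ^ ((3:ℝ)/2)) - 2 * (1 / √(1 - m * sin θ ^ 2)) := by
    intro θ
    have hpos := one_sub_mul_sin_sq_pos hm θ
    have hq := sqrt_pos.2 hpos
    rw [rpow_three_halves_eq_mul_sqrt hpos.le]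
    field_simp
    ring
  rw [← integral_const_mul, integral_congr fun θ _ => hsplit θ,
    integral_sub (((continuous_div_one_sub_mul_sin_sq_rpow 1 hm).const_mul _).intervalIntegrable _ _)
      (((continuous_one_div_sqrt_one_sub_mul_sin_sq hm).const_mul _).intervalIntegrable _ _),
    integral_const_mul, integral_const_mul, ← one_sub_mul_integral_inv_rpow_three_halves hm,
    ellipticK]
  ring

end Elliptic

section PeriodIntegral

variable {φ : ℝ → ℝ}

lemma continuous_comp_sin (hφ : ContinuousOn φ (Set.Icc (-1) 1)) :
    Continuous fun u => φ (sin u) :=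
  hφ.comp_continuous continuous_sin fun u => ⟨neg_one_le_sin u, sin_le_one u⟩

lemma integral_comp_sin_zero_two_pi (hφ : ContinuousOn φ (Set.Icc (-1) 1)) :
    ∫ u in (0:ℝ)..2 * π, φ (sin u) = 2 * ∫ u in -(π/2)..π/2, φ (sin u) := by
  have hint : ∀ a b : ℝ, IntervalIntegrable (fun u => φ (sin u)) MeasureTheory.volume a b :=
    fun a b => (continuous_comp_sin hφ).intervalIntegrable a b
  have hper : Function.Periodic (fun u => φ (sin u)) (2 * π) := fun u => by
    simp only [sin_add_two_pi]
  have hreflect : ∫ u in π/2..-(π/2) + 2 * π, φ (sin u) = ∫ u in -(π/2)..π/2, φ (sin u) := by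
    simpa only [sin_pi_sub, show π - π/2 = π/2 by ring, show π - -(π/2) = -(π/2) + 2 * π by ring]
      using (integral_comp_sub_left (fun u => φ (sin u)) π (a := -(π/2)) (b := π/2)).symm
  calc ∫ u in (0:ℝ)..2 * π, φ (sin u)
      = ∫ u in -(π/2)..-(π/2) + 2 * π, φ (sin u) := by
        simpa only [zero_add] using hper.intervalIntegral_add_eq 0 (-(π/2))
    _ = (∫ u in -(π/2)..π/2, φ (sin u)) + ∫ u in π/2..-(π/2) + 2 * π, φ (sin u) :=
        (integral_add_adjacent_intervals (hint _ _) (hint _ _)).symm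
    _ = 2 * ∫ u in -(π/2)..π/2, φ (sin u) := by rw [hreflect]; ring

lemma integral_comp_sin_two_pi_mul (hφ : ContinuousOn φ (Set.Icc (-1) 1)) :
    ∫ v in (0:ℝ)..1, φ (sin (2 * π * v)) = 2 / π * ∫ θ in (0:ℝ)..π/2, φ (2 * sin θ ^ 2 - 1) := by
  have hsin : ∀ θ, sin (2 * θ - π/2) = 2 * sin θ ^ 2 - 1 := fun θ => by
    rw [sin_sub_pi_div_two, cos_two_mul, cos_sq']
    ring
  have hscale := integral_comp_mul_left (fun u => φ (sin u)) (mul_ne_zero two_ne_zero pi_ne_zero)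
    (a := 0) (b := 1)
  have hhalf := integral_comp_mul_sub (fun u => φ (sin u)) (two_ne_zero' ℝ) (π/2)
    (a := 0) (b := π/2)
  simp only [mul_zero, mul_one, zero_sub, smul_eq_mul, hsin,
    show 2 * (π/2) - π/2 = π/2 by ring] at hscale hhalf
  rw [hscale, integral_comp_sin_zero_two_pi hφ, hhalf]
  field_simp

end PeriodIntegral

theorem Is_elliptic_formula (δ : ℝ) (hδ0 : 0 < δ) (hδ1 : δ < 1) :
    (∫ v in (0:ℝ)..1, Real.sin (2 * π * v)
        / (1 - δ * Real.sin (2 * π * v)) ^ ((3:ℝ)/2))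
      = (2 / π) * (1 / (δ * (1 - δ) * Real.sqrt (1 + δ)))
        * (ellipticE (2 * δ / (1 + δ)) - (1 - δ) * ellipticK (2 * δ / (1 + δ))) := by
  have h1δ : 0 < 1 + δ := by linarith
  set m := 2 * δ / (1 + δ) with hm_def
  have hm1 : m < 1 := by rw [hm_def, div_lt_one h1δ]; linarith
  have hφ : ContinuousOn (fun s => s / (1 - δ * s) ^ ((3:ℝ)/2)) (Set.Icc (-1) 1) := by
    refine continuousOn_id.div ((by fun_prop : Continuous fun s => 1 - δ * s).continuousOn.rpow_const
      fun _ _ => Or.inr (by norm_num)) fun s hs => (rpow_pos_of_pos ?_ _).ne'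
    nlinarith [hs.1, hs.2]
  -- `1 - δ (2 sin² θ - 1) = (1 + δ) (1 - m sin² θ)`
  have hfactor : ∀ θ, (2 * sin θ ^ 2 - 1) / (1 - δ * (2 * sin θ ^ 2 - 1)) ^ ((3:ℝ)/2)
      = ((1 + δ) ^ ((3:ℝ)/2))⁻¹ * ((2 * sin θ ^ 2 - 1) / (1 - m * sin θ ^ 2) ^ ((3:ℝ)/2)) := by
    intro θ
    rw [show 1 - δ * (2 * sin θ ^ 2 - 1) = (1 + δ) * (1 - m * sin θ ^ 2) by rw [hm_def]; field_simp; ring,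
      mul_rpow h1δ.le (one_sub_mul_sin_sq_pos hm1 θ).le]
    ring
  rw [integral_comp_sin_two_pi_mul hφ, integral_congr fun θ _ => hfactor θ, integral_const_mul,
    rpow_three_halves_eq_mul_sqrt h1δ.le]
  have hT := integral_two_sin_sq_sub_one_div_rpow_three_halves hm1
  set T := ∫ θ in (0:ℝ)..π/2, (2 * sin θ ^ 2 - 1) / (1 - m * sin θ ^ 2) ^ ((3:ℝ)/2)
  have hδ1_ne : 1 - δ ≠ 0 := by linarith
  rw [hm_def] at hT
  field_simp at hT ⊢
  linear_combination hT
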